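/- Let ε ∈ (0,1), λ = 2·ln(1/ε), and t = ⌈4e²·ln(1/ε)⌉. Then ∑_{j=t+1}^{∞} C(j,t) · λ^j / j! ≤ ε. -/
import Mathlib

private lemma choose_le_two_pow' (n k : ℕ) : n.choose k ≤ 2 ^ n := by
  rcases le_or_gt k n with h | h
  · calc n.choose k ≤ ∑ m ∈ Finset.range (n + 1), n.choose m :=
        Finset.single_le_sum (fun _ _ => Nat.zero_le _)
          (Finset.mem_range.2 (Nat.lt_succ_of_le h))
    _ = 2 ^ n := Nat.sum_range_choose n
  · simp [Nat.choose_eq_zero_of_lt h]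

/-- `k! ≥ (k/e)^k`, i.e. `k^k ≤ k! * e^k`. -/
private lemma pow_self_le_factorial_mul (k : ℕ) :
    (k : ℝ) ^ k ≤ (k.factorial : ℝ) * Real.exp 1 ^ k := by
  have h := Real.pow_div_factorial_le_exp (x := (k : ℝ)) (Nat.cast_nonneg k) k
  rw [div_le_iff₀ (by positivity)] at h
  calc (k : ℝ) ^ k ≤ Real.exp k * k.factorial := h
  _ = (k.factorial : ℝ) * Real.exp 1 ^ k := by
      rw [← Real.exp_one_rpow (k : ℝ), Real.rpow_natCast]; ring

/-- With `λ = 2·ln(1/ε)` and `t = ⌈4e²·ln(1/ε)⌉`, the tail sum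
`∑_{j>t} C(j,t)·λ^j/j!` is at most `ε`. -/
theorem tail_sum_bound (ε : ℝ) (hε0 : 0 < ε) (hε1 : ε < 1) :
    (∑' j : ℕ,
        (((j + (⌈4 * Real.exp 1 ^ 2 * Real.log (1 / ε)⌉₊ + 1)).choose
            ⌈4 * Real.exp 1 ^ 2 * Real.log (1 / ε)⌉₊ : ℝ) *
          (2 * Real.log (1 / ε)) ^ (j + (⌈4 * Real.exp 1 ^ 2 * Real.log (1 / ε)⌉₊ + 1)) /
          ((j + (⌈4 * Real.exp 1 ^ 2 * Real.log (1 / ε)⌉₊ + 1)).factorial : ℝ)))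
      ≤ ε := by
  set L : ℝ := Real.log (1 / ε) with hLdef
  have hL : 0 < L := Real.log_pos (by rw [lt_div_iff₀ hε0]; linarith)
  set t : ℕ := ⌈4 * Real.exp 1 ^ 2 * L⌉₊ with htdef
  have he1 : (1 : ℝ) < Real.exp 1 := by
    have := Real.add_one_le_exp 1; linarith
  have he0 : (0 : ℝ) < Real.exp 1 := by linarith
  have ht : 4 * Real.exp 1 ^ 2 * L ≤ (t : ℝ) := Nat.le_ceil _
  -- per-term bound
  have hterm : ∀ j : ℕ,
      ((j + (t + 1)).choose t : ℝ) * (2 * L) ^ (j + (t + 1)) / ((j + (t + 1)).factorial : ℝ)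
        ≤ (Real.exp 1)⁻¹ ^ (j + (t + 1)) := by
    intro j
    set k : ℕ := j + (t + 1) with hkdef
    have hk1 : 1 ≤ k := by omega
    have hkpos : (0 : ℝ) < (k : ℝ) := by exact_mod_cast Nat.lt_of_lt_of_le Nat.zero_lt_one hk1
    have hkt : 4 * Real.exp 1 ^ 2 * L ≤ (k : ℝ) := by
      refine ht.trans ?_
      exact_mod_cast Nat.le_of_lt (by omega : t < k)
    have hC : ((k.choose t : ℕ) : ℝ) ≤ 2 ^ k := by
      exact_mod_cast choose_le_two_pow' k t
    have hfac : (0 : ℝ) < (k.factorial : ℝ) := by exact_mod_cast k.factorial_pos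
    have hlam : (0 : ℝ) ≤ 2 * L := by linarith
    -- (2L)^k / k! ≤ (2L e / k)^k
    have h1 : (2 * L) ^ k / (k.factorial : ℝ) ≤ (2 * L * Real.exp 1 / k) ^ k := by
      rw [div_le_iff₀ hfac, div_pow, div_mul_eq_mul_div, le_div_iff₀ (by positivity)]
      calc (2 * L) ^ k * (k : ℝ) ^ k
          ≤ (2 * L) ^ k * ((k.factorial : ℝ) * Real.exp 1 ^ k) := by
            exact mul_le_mul_of_nonneg_left (pow_self_le_factorial_mul k) (by positivity)
        _ = (2 * L * Real.exp 1) ^ k * (k.factorial : ℝ) := by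
            rw [mul_pow]; ring
    -- 2 * (2L e / k) ≤ e⁻¹
    have h2 : 2 * (2 * L * Real.exp 1 / k) ≤ (Real.exp 1)⁻¹ := by
      have hee : Real.exp 1 * (Real.exp 1)⁻¹ = 1 := mul_inv_cancel₀ (ne_of_gt he0)
      rw [show 2 * (2 * L * Real.exp 1 / (k : ℝ)) = 4 * L * Real.exp 1 / k from by ring,
        div_le_iff₀ hkpos]
      nlinarith [mul_le_mul_of_nonneg_left hkt (inv_nonneg.2 he0.le), hee, hL.le]
    have hq0 : (0 : ℝ) ≤ 2 * L * Real.exp 1 / k := by positivity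
    calc ((k.choose t : ℕ) : ℝ) * (2 * L) ^ k / (k.factorial : ℝ)
        ≤ 2 ^ k * ((2 * L) ^ k / (k.factorial : ℝ)) := by
          rw [mul_div_assoc]
          exact mul_le_mul_of_nonneg_right hC (by positivity)
      _ ≤ 2 ^ k * (2 * L * Real.exp 1 / k) ^ k := by
          exact mul_le_mul_of_nonneg_left h1 (by positivity)
      _ = (2 * (2 * L * Real.exp 1 / k)) ^ k := by rw [mul_pow]
      _ ≤ ((Real.exp 1)⁻¹) ^ k := by
          exact pow_le_pow_left₀ (by positivity) h2 k
  -- geometric series facts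
  have hr0 : (0 : ℝ) ≤ (Real.exp 1)⁻¹ := by positivity
  have hr1 : (Real.exp 1)⁻¹ < 1 := by
    rw [inv_lt_one_iff₀]; right; exact he1
  have hgeo : Summable fun j : ℕ => (Real.exp 1)⁻¹ ^ (j + (t + 1)) := by
    simp_rw [pow_add]
    exact (summable_geometric_of_lt_one hr0 hr1).mul_right _
  have hterm_nonneg : ∀ j : ℕ,
      (0 : ℝ) ≤ ((j + (t + 1)).choose t : ℝ) * (2 * L) ^ (j + (t + 1)) /
        ((j + (t + 1)).factorial : ℝ) := by
    intro j; have hlam : (0 : ℝ) ≤ 2 * L := by linarith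
    positivity
  have hsum : Summable fun j : ℕ =>
      ((j + (t + 1)).choose t : ℝ) * (2 * L) ^ (j + (t + 1)) /
        ((j + (t + 1)).factorial : ℝ) :=
    Summable.of_nonneg_of_le hterm_nonneg hterm hgeo
  have hle := Summable.tsum_le_tsum hterm hsum hgeo
  refine hle.trans ?_
  have hval : (∑' j : ℕ, (Real.exp 1)⁻¹ ^ (j + (t + 1)))
      = (Real.exp 1)⁻¹ ^ (t + 1) * (1 - (Real.exp 1)⁻¹)⁻¹ := by
    simp_rw [pow_add]
    rw [tsum_mul_right, tsum_geometric_of_lt_one hr0 hr1]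
    ring
  rw [hval]
  -- (e⁻¹)^(t+1) / (1 - e⁻¹) ≤ (e⁻¹)^t ≤ ε
  have he2 : (2 : ℝ) ≤ Real.exp 1 := by
    have := Real.add_one_le_exp 1; linarith
  have step1 : (Real.exp 1)⁻¹ ^ (t + 1) * (1 - (Real.exp 1)⁻¹)⁻¹ ≤ (Real.exp 1)⁻¹ ^ t := by
    rw [pow_succ, mul_assoc]
    have h1e : (Real.exp 1)⁻¹ ≤ 1 / 2 := by
      rw [inv_le_iff_one_le_mul₀ he0]; linarith
    have hpos : (0 : ℝ) < 1 - (Real.exp 1)⁻¹ := by linarith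
    have : (Real.exp 1)⁻¹ * (1 - (Real.exp 1)⁻¹)⁻¹ ≤ 1 := by
      rw [← div_eq_mul_inv, div_le_one hpos]; linarith
    calc (Real.exp 1)⁻¹ ^ t * ((Real.exp 1)⁻¹ * (1 - (Real.exp 1)⁻¹)⁻¹)
        ≤ (Real.exp 1)⁻¹ ^ t * 1 := by
          exact mul_le_mul_of_nonneg_left this (by positivity)
      _ = (Real.exp 1)⁻¹ ^ t := mul_one _
  refine step1.trans ?_
  have hLt : L ≤ (t : ℝ) := by
    refine le_trans ?_ ht
    have h4 : (1 : ℝ) ≤ 4 * Real.exp 1 ^ 2 := by nlinarith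
    nlinarith [mul_le_mul_of_nonneg_right h4 hL.le]
  have : (Real.exp 1)⁻¹ ^ t = Real.exp (-(t : ℝ)) := by
    rw [← Real.exp_neg, ← Real.exp_nat_mul]; ring_nf
  rw [this]
  have : Real.exp (-(t : ℝ)) ≤ Real.exp (-L) := Real.exp_le_exp.2 (by linarith)
  refine this.trans ?_
  have : Real.exp (-L) = ε := by
    rw [hLdef, Real.log_div one_ne_zero (ne_of_gt hε0), Real.log_one, zero_sub, neg_neg,
      Real.exp_log hε0]
  rw [this]
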